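/- Let ω > 0 and ħ > 0 be real. Then there exists a real constant c such that the function W: ℝ → ℝ, W(x) = ω² x² + 8ħ²ω(2ωx² − ħ)/(2ωx² + ħ)² + c, satisfies the nonlinear fourth-order ordinary differential equation −ħ² W''''(x) − 12ω² (d/dx)(x·W(x)) + 3 (d²/dx²)(W(x)²) − 2ω² x² W''(x) + 4ω⁴ x² = 0 for all x ∈ ℝ. (Note that 2ωx² + ħ > 0 for all x, so W is smooth on all of ℝ.) -/

import Mathlib

/-!
The denominator `u = 2ωx² + ħ` is positive, so `W` is smooth. Since `d/dx = 4ωx · d/du` on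
functions of `u` and `x² = (u - ħ)/(2ω)`, every derivative of `W - ω²x² - c = 8ħ²ω(u - 2ħ)/u²`
is a polynomial in `u` over a power of `u`, multiplied by `x` in odd orders. With these closed
forms for the first four derivatives of `W`, the ODE becomes a rational identity in `x`. The
constant `c` enters it only through `6c(W'' - 2ω²)`, which pins it down as `c = 4ωħ/3`.
-/

noncomputable section

/-- `W(x) = ω²x² + 8ħ²ω(2ωx² − ħ)/(2ωx² + ħ)² + c`. -/
def Wex1 (ω hbar c : ℝ) : ℝ → ℝ := fun x =>
  ω ^ 2 * x ^ 2 + 8 * hbar ^ 2 * ω * (2 * ω * x ^ 2 - hbar) / (2 * ω * x ^ 2 + hbar) ^ 2 + c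

theorem iterate_deriv_two_sq {f f' f'' : ℝ → ℝ} (hf : ∀ x, HasDerivAt f (f' x) x)
    (hf' : ∀ x, HasDerivAt f' (f'' x) x) (x : ℝ) :
    deriv^[2] (fun t => f t ^ 2) x = 2 * (f' x ^ 2 + f x * f'' x) := by
  have hsq : deriv (fun t => f t ^ 2) = fun t => 2 * (f t * f' t) :=
    funext fun t => ((hf t).pow 2).deriv.trans (by ring)
  rw [Function.iterate_succ_apply', Function.iterate_one, hsq]
  exact (((hf x).mul (hf' x)).const_mul 2).deriv.trans (by ring)

namespace Wex1

def den (ω hbar x : ℝ) : ℝ := 2 * ω * x ^ 2 + hbar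

def deriv1 (ω hbar x : ℝ) : ℝ :=
  2 * ω ^ 2 * x + 32 * hbar ^ 2 * ω ^ 2 * x * (4 * hbar - den ω hbar x) / den ω hbar x ^ 3

def deriv2 (ω hbar x : ℝ) : ℝ :=
  2 * ω ^ 2 + 96 * hbar ^ 2 * ω ^ 2 *
    (den ω hbar x ^ 2 - 8 * hbar * den ω hbar x + 8 * hbar ^ 2) / den ω hbar x ^ 4

def deriv3 (ω hbar x : ℝ) : ℝ :=
  -768 * hbar ^ 2 * ω ^ 3 * x *
    (den ω hbar x ^ 2 - 12 * hbar * den ω hbar x + 16 * hbar ^ 2) / den ω hbar x ^ 5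

def deriv4 (ω hbar x : ℝ) : ℝ :=
  768 * hbar ^ 2 * ω ^ 3 * (5 * den ω hbar x ^ 3 - 90 * hbar * den ω hbar x ^ 2
    + 240 * hbar ^ 2 * den ω hbar x - 160 * hbar ^ 3) / den ω hbar x ^ 6

variable {ω hbar : ℝ}

theorem den_pos (hω : 0 ≤ ω) (hb : 0 < hbar) (x : ℝ) : 0 < den ω hbar x := by
  unfold den
  positivity

theorem hasDerivAt (hω : 0 ≤ ω) (hb : 0 < hbar) (c x : ℝ) :
    HasDerivAt (Wex1 ω hbar c) (deriv1 ω hbar x) x := by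
  have hu := (den_pos hω hb x).ne'
  unfold Wex1 deriv1 den at *
  refine (DifferentiableAt.hasDerivAt (by fun_prop (disch := positivity))).congr_deriv ?_
  simp (disch := first | fun_prop (disch := positivity) | positivity) only [deriv_fun_add,
    deriv_fun_sub, deriv_fun_div, deriv_fun_mul, deriv_const', deriv_fun_pow, deriv_id'']
  field_simp
  ring

theorem hasDerivAt_deriv1 (hω : 0 ≤ ω) (hb : 0 < hbar) (x : ℝ) :
    HasDerivAt (deriv1 ω hbar) (deriv2 ω hbar x) x := by
  have hu := (den_pos hω hb x).ne'
  unfold deriv1 deriv2 den at *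
  refine (DifferentiableAt.hasDerivAt (by fun_prop (disch := positivity))).congr_deriv ?_
  simp (disch := first | fun_prop (disch := positivity) | positivity) only [deriv_fun_add,
    deriv_fun_sub, deriv_fun_div, deriv_const_mul_id', deriv_fun_mul, deriv_const',
    deriv_fun_pow, deriv_id'']
  field_simp
  ring

theorem hasDerivAt_deriv2 (hω : 0 ≤ ω) (hb : 0 < hbar) (x : ℝ) :
    HasDerivAt (deriv2 ω hbar) (deriv3 ω hbar x) x := by
  have hu := (den_pos hω hb x).ne'
  unfold deriv2 deriv3 den at *
  refine (DifferentiableAt.hasDerivAt (by fun_prop (disch := positivity))).congr_deriv ?_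
  simp (disch := first | fun_prop (disch := positivity) | positivity) only [deriv_fun_add,
    deriv_fun_sub, deriv_fun_div, deriv_fun_mul, deriv_const', deriv_fun_pow, deriv_id'']
  field_simp
  ring

theorem hasDerivAt_deriv3 (hω : 0 ≤ ω) (hb : 0 < hbar) (x : ℝ) :
    HasDerivAt (deriv3 ω hbar) (deriv4 ω hbar x) x := by
  have hu := (den_pos hω hb x).ne'
  unfold deriv3 deriv4 den at *
  refine (DifferentiableAt.hasDerivAt (by fun_prop (disch := positivity))).congr_deriv ?_
  simp (disch := first | fun_prop (disch := positivity) | positivity) only [deriv_fun_add,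
    deriv_fun_sub, deriv_fun_div, deriv_const_mul_id', deriv_fun_mul, deriv_const',
    deriv_fun_pow, deriv_id'']
  field_simp
  ring

theorem iterate_deriv_two (hω : 0 ≤ ω) (hb : 0 < hbar) (c : ℝ) :
    deriv^[2] (Wex1 ω hbar c) = deriv2 ω hbar := by
  rw [Function.iterate_succ_apply', Function.iterate_one,
    funext fun x => (hasDerivAt hω hb c x).deriv,
    funext fun x => (hasDerivAt_deriv1 hω hb x).deriv]

theorem iterate_deriv_four (hω : 0 ≤ ω) (hb : 0 < hbar) (c : ℝ) :
    deriv^[4] (Wex1 ω hbar c) = deriv4 ω hbar := by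
  rw [Function.iterate_succ_apply', Function.iterate_succ_apply', iterate_deriv_two hω hb,
    funext fun x => (hasDerivAt_deriv2 hω hb x).deriv,
    funext fun x => (hasDerivAt_deriv3 hω hb x).deriv]

theorem ode_residual_eq_zero (hω : 0 ≤ ω) (hb : 0 < hbar) (x : ℝ) :
    -hbar ^ 2 * deriv4 ω hbar x
      - 12 * ω ^ 2 * (Wex1 ω hbar (4 * ω * hbar / 3) x + x * deriv1 ω hbar x)
      + 3 * (2 * (deriv1 ω hbar x ^ 2 + Wex1 ω hbar (4 * ω * hbar / 3) x * deriv2 ω hbar x))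
      - 2 * ω ^ 2 * x ^ 2 * deriv2 ω hbar x + 4 * ω ^ 4 * x ^ 2 = 0 := by
  have hu := (den_pos hω hb x).ne'
  unfold Wex1 deriv1 deriv2 deriv4 den at *
  field_simp
  ring

end Wex1

/-- there is a real constant `c` such that `W` satisfies the nonlinear
fourth-order ODE `−ħ²W'''' − 12ω²(xW)' + 3(W²)'' − 2ω²x²W'' + 4ω⁴x² = 0` on all of `ℝ`. -/
theorem stmt_18 (ω hbar : ℝ) (hω : 0 < ω) (hb : 0 < hbar) :
    ∃ c : ℝ, ∀ x : ℝ,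
      -hbar ^ 2 * (deriv^[4] (Wex1 ω hbar c)) x
          - 12 * ω ^ 2 * deriv (fun t => t * Wex1 ω hbar c t) x
          + 3 * (deriv^[2] (fun t => (Wex1 ω hbar c t) ^ 2)) x
          - 2 * ω ^ 2 * x ^ 2 * (deriv^[2] (Wex1 ω hbar c)) x
          + 4 * ω ^ 4 * x ^ 2 = 0 := by
  refine ⟨4 * ω * hbar / 3, fun x => ?_⟩
  have hW := Wex1.hasDerivAt hω.le hb (4 * ω * hbar / 3)
  have hxW : deriv (fun t => t * Wex1 ω hbar (4 * ω * hbar / 3) t) x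
      = Wex1 ω hbar (4 * ω * hbar / 3) x + x * Wex1.deriv1 ω hbar x :=
    ((hasDerivAt_id' x).mul (hW x)).deriv.trans (by ring)
  rw [Wex1.iterate_deriv_four hω.le hb, Wex1.iterate_deriv_two hω.le hb, hxW,
    iterate_deriv_two_sq hW (Wex1.hasDerivAt_deriv1 hω.le hb)]
  exact Wex1.ode_residual_eq_zero hω.le hb x
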